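/- If λ ⊆ Box_{k,n} with λ having at most k parts, and μ ⊇ λ with μ/λ a rim hook of size r < n and μ_1 > n−k, then the Northeastern-most box of μ/λ is in the first row of μ, and any rim hook of size n removable from μ must have its Northeastern-most box at the end of the first row of μ. -/

import Mathlib

open MvPolynomial


theorem sorted_replicate_ge (m c : ℕ) : (List.replicate m c).Pairwise (· ≥ ·) := by
  induction m with
  | zero => simp
  | succ n ih =>
    rw [List.replicate_succ, List.pairwise_cons]
    exact ⟨fun b hb => (List.eq_of_mem_replicate hb).le, ih⟩

/-- `h_m` with integer index: zero for negative `m`. -/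
noncomputable def hpoly (N : ℕ) (m : ℤ) : MvPolynomial (Fin N) ℚ :=
  if 0 ≤ m then hsymm (Fin N) ℚ m.toNat else 0

/-- The Schur polynomial in `N` variables of a partition (Young diagram), via
the Jacobi–Trudi determinant `det (h_{λ_i + j - i})`. -/
noncomputable def schur (N : ℕ) (μ : YoungDiagram) : MvPolynomial (Fin N) ℚ :=
  Matrix.det (Matrix.of fun i j : Fin μ.rowLens.length =>
    hpoly N ((μ.rowLens.get i : ℤ) + (j : ℤ) - (i : ℤ)))

/-- The hook partition `(b, 1^(a-1))` (with `a` rows; intended for `a, b ≥ 1`). -/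
def hookDiagram (a b : ℕ) : YoungDiagram :=
  YoungDiagram.ofRowLens (max b 1 :: List.replicate (a - 1) 1) (by
    simp only [List.sortedGE_iff_pairwise, List.pairwise_cons]
    refine ⟨fun x hx => ?_, sorted_replicate_ge ..⟩
    rw [List.eq_of_mem_replicate hx]
    omega)

/-- The cells of the skew shape `μ / λ`. -/
def skewCells (lam mu : YoungDiagram) : Finset (ℕ × ℕ) := mu.cells \ lam.cells

/-- Two boxes are (edgewise) adjacent. -/
def Adj (c d : ℕ × ℕ) : Prop :=
  (c.1 = d.1 ∧ (c.2 = d.2 + 1 ∨ d.2 = c.2 + 1)) ∨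
  (c.2 = d.2 ∧ (c.1 = d.1 + 1 ∨ d.1 = c.1 + 1))

/-- A set of boxes is edgewise connected. -/
def IsConnectedCells (s : Finset (ℕ × ℕ)) : Prop :=
  ∀ c ∈ s, ∀ d ∈ s, Relation.ReflTransGen (fun x y => x ∈ s ∧ y ∈ s ∧ Adj x y) c d

/-- A set of boxes contains no 2×2 square. -/
def NoSquare (s : Finset (ℕ × ℕ)) : Prop :=
  ¬∃ i j : ℕ, (i, j) ∈ s ∧ (i + 1, j) ∈ s ∧ (i, j + 1) ∈ s ∧ (i + 1, j + 1) ∈ s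

/-- `μ / λ` is a rim hook (border strip): nonempty, connected, no 2×2 square. -/
def IsRimHook (lam mu : YoungDiagram) : Prop :=
  lam ≤ mu ∧ (skewCells lam mu).Nonempty ∧ IsConnectedCells (skewCells lam mu) ∧
    NoSquare (skewCells lam mu)

/-- The number of boxes of the skew shape `μ / λ`. -/
def skewSize (lam mu : YoungDiagram) : ℕ := (skewCells lam mu).card

/-- The height (number of nonempty rows) of the skew shape `μ / λ`. -/
def skewHt (lam mu : YoungDiagram) : ℕ := ((skewCells lam mu).image Prod.fst).card

/-- The `k × (n-k)` rectangle partition `Box_{k,n}`. -/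
def box (k n : ℕ) : YoungDiagram :=
  YoungDiagram.ofRowLens (List.replicate k (n - k)) (sorted_replicate_ge ..).sortedGE

/-- The diagonal `j - i` of a box `(i, j)`. -/
def diagOf (c : ℕ × ℕ) : ℤ := (c.2 : ℤ) - (c.1 : ℤ)

/-!
A skew shape `μ / ν` with `ν₁ < μ₁` contains the last box `(0, μ₁ - 1)` of the first row, whose
diagonal `μ₁ - 1` exceeds that of every other box of `μ`, so that box is its Northeastern-most box.
For `μ / λ` this applies because `λ₁ ≤ n - k < μ₁`.

For a rim hook `μ / ν` of size `n`: having no 2×2 square, its boxes lie on distinct diagonals, all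
`≥ 1 - k` since `μ` has at most `k` rows, so its Northeastern-most box has diagonal `≥ n - k`.
Boxes of `μ` below the first row have diagonal `≤ μ₂ - 2 < n - k`, because `μ / λ` has no 2×2
square and hence `μ₂ ≤ λ₁ + 1`. So that box is in the first row, which forces `ν₁ < μ₁`.
-/

lemma mem_skewCells {lam mu : YoungDiagram} {c : ℕ × ℕ} :
    c ∈ skewCells lam mu ↔ c ∈ mu ∧ c ∉ lam := by
  simp [skewCells, YoungDiagram.mem_cells]

lemma YoungDiagram.rowLen_le_of_le_box {lam : YoungDiagram} {k n : ℕ} (h : lam ≤ box k n)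
    (i : ℕ) : lam.rowLen i ≤ n - k := by
  by_contra! hlt
  have hmem := h (YoungDiagram.mem_iff_lt_rowLen.mpr hlt)
  simp [box, YoungDiagram.mem_ofRowLens] at hmem

lemma diagOf_add_lt_rowLen {mu : YoungDiagram} {c : ℕ × ℕ} (hc : c ∈ mu) {i : ℕ}
    (hi : i ≤ c.1) : diagOf c + i < mu.rowLen i := by
  have hj : c.2 < mu.rowLen c.1 := YoungDiagram.mem_iff_lt_rowLen.mp hc
  have := mu.rowLen_anti i c.1 hi
  simp only [diagOf]
  omega

lemma one_sub_colLen_le_diagOf {mu : YoungDiagram} {c : ℕ × ℕ} (hc : c ∈ mu) :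
    1 - (mu.colLen 0 : ℤ) ≤ diagOf c := by
  have hi : c.1 < mu.colLen c.2 := YoungDiagram.mem_iff_lt_colLen.mp hc
  have := mu.colLen_anti 0 c.2 (Nat.zero_le _)
  simp only [diagOf]
  omega

lemma NoSquare.diagOf_injOn {lam mu : YoungDiagram} (hsq : NoSquare (skewCells lam mu)) :
    Set.InjOn diagOf (skewCells lam mu) := by
  suffices h : ∀ {c d : ℕ × ℕ}, c ∈ skewCells lam mu → d ∈ skewCells lam mu → c.1 < d.1 →
      diagOf c ≠ diagOf d by
    rintro c hc d hd hcd
    rcases lt_trichotomy c.1 d.1 with hlt | heq | hgt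
    · exact absurd hcd (h hc hd hlt)
    · simp only [diagOf] at hcd
      exact Prod.ext heq (by omega)
    · exact absurd hcd.symm (h hd hc hgt)
  rintro ⟨i, j⟩ ⟨i', j'⟩ hc hd (hi : i < i') hdiag
  simp only [diagOf] at hdiag
  obtain ⟨-, hcl⟩ := mem_skewCells.mp hc
  have hd' : (i + 1, j + 1) ∈ mu := mu.up_left_mem (by omega) (by omega) (mem_skewCells.mp hd).1
  -- the 2×2 square with corners `(i, j)` and `(i + 1, j + 1)` lies in `μ` but misses `λ`
  have hsk : ∀ a b, a ≤ 1 → b ≤ 1 → (i + a, j + b) ∈ skewCells lam mu := fun a b ha hb =>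
    mem_skewCells.mpr ⟨mu.up_left_mem (by omega) (by omega) hd',
      fun h => hcl (lam.up_left_mem (by omega) (by omega) h)⟩
  exact hsq ⟨i, j, hsk 0 0 zero_le_one zero_le_one, hsk 1 0 le_rfl zero_le_one,
    hsk 0 1 zero_le_one le_rfl, hsk 1 1 le_rfl le_rfl⟩

lemma NoSquare.skewSize_le {lam mu : YoungDiagram} (hsq : NoSquare (skewCells lam mu))
    {D : ℤ} (hD : ∀ c ∈ skewCells lam mu, diagOf c ≤ D) :
    skewSize lam mu ≤ (D + mu.colLen 0).toNat := by
  have hmaps : Set.MapsTo diagOf (skewCells lam mu) (Finset.Icc (1 - (mu.colLen 0 : ℤ)) D) :=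
    fun c hc => Finset.mem_Icc.mpr
      ⟨one_sub_colLen_le_diagOf (mem_skewCells.mp hc).1, hD c hc⟩
  have := Finset.card_le_card_of_injOn diagOf hmaps hsq.diagOf_injOn
  rwa [Int.card_Icc, show D + 1 - (1 - (mu.colLen 0 : ℤ)) = D + mu.colLen 0 by ring] at this

lemma NoSquare.rowLen_one_le {lam mu : YoungDiagram} (hsq : NoSquare (skewCells lam mu)) :
    mu.rowLen 1 ≤ lam.rowLen 0 + 1 := by
  by_contra! h
  set j := lam.rowLen 0
  have h11 : (1, j + 1) ∈ mu := YoungDiagram.mem_iff_lt_rowLen.mpr (by omega)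
  have hsk : ∀ a b, a ≤ 1 → b ≤ 1 → (a, j + b) ∈ skewCells lam mu := fun a b ha hb =>
    mem_skewCells.mpr ⟨mu.up_left_mem ha (by omega) h11, fun hmem => by
      have := lam.rowLen_anti 0 a (Nat.zero_le _)
      have := YoungDiagram.mem_iff_lt_rowLen.mp hmem
      omega⟩
  exact hsq ⟨0, j, hsk 0 0 zero_le_one zero_le_one, hsk 1 0 le_rfl zero_le_one,
    hsk 0 1 zero_le_one le_rfl, hsk 1 1 le_rfl le_rfl⟩

lemma eq_end_of_first_row_of_diagOf_max {nu mu : YoungDiagram} (hlt : nu.rowLen 0 < mu.rowLen 0)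
    {c : ℕ × ℕ} (hc : c ∈ mu) (hmax : ∀ d ∈ skewCells nu mu, diagOf d ≤ diagOf c) :
    c = (0, mu.rowLen 0 - 1) := by
  have hcorner : (0, mu.rowLen 0 - 1) ∈ skewCells nu mu := by
    rw [mem_skewCells, YoungDiagram.mem_iff_lt_rowLen, YoungDiagram.mem_iff_lt_rowLen]
    omega
  have hge := hmax _ hcorner
  have hj : c.2 < mu.rowLen c.1 := YoungDiagram.mem_iff_lt_rowLen.mp hc
  have := mu.rowLen_anti 0 c.1 (Nat.zero_le _)
  simp only [diagOf] at hge
  ext <;> simp only <;> omega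

theorem NE_box_in_first_row_general (k n : ℕ) (hkn : k < n)
    (lam mu : YoungDiagram) (hlam : lam ≤ box k n) (hcl : mu.colLen 0 ≤ k)
    (hhook : IsRimHook lam mu) (hfr : n - k < mu.rowLen 0) :
    (∀ c ∈ skewCells lam mu, (∀ d ∈ skewCells lam mu, diagOf d ≤ diagOf c) → c.1 = 0) ∧
    (∀ nu : YoungDiagram, IsRimHook nu mu → skewSize nu mu = n →
      ∀ c ∈ skewCells nu mu, (∀ d ∈ skewCells nu mu, diagOf d ≤ diagOf c) →
        c = (0, mu.rowLen 0 - 1)) := by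
  have hlam0 := YoungDiagram.rowLen_le_of_le_box hlam 0
  refine ⟨fun c hc hmax => ?_, fun nu hnu hsize c hc hmax => ?_⟩
  · rw [eq_end_of_first_row_of_diagOf_max (by omega) (mem_skewCells.mp hc).1 hmax]
  obtain ⟨i, j⟩ := c
  obtain ⟨hcmu, hcnu⟩ := mem_skewCells.mp hc
  have hn : n ≤ (diagOf (i, j) + mu.colLen 0).toNat := hsize ▸ hnu.2.2.2.skewSize_le hmax
  have hrow1 := hhook.2.2.2.rowLen_one_le
  obtain rfl : i = 0 := by
    by_contra h
    have := diagOf_add_lt_rowLen hcmu (i := 1) (by simp only; omega)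
    omega
  refine eq_end_of_first_row_of_diagOf_max ?_ hcmu hmax
  have hj : j < mu.rowLen 0 := YoungDiagram.mem_iff_lt_rowLen.mp hcmu
  have hnuj : nu.rowLen 0 ≤ j := not_lt.mp (mt YoungDiagram.mem_iff_lt_rowLen.mpr hcnu)
  omega

/-- if `μ ⊃ λ ⊆ Box_{k,n}` with `μ/λ` a rim hook of size `r < n` and
`μ₁ > n-k`, then the Northeastern-most box (the box of maximal diagonal) of `μ/λ` is
in the first row of `μ`, and any rim hook of size `n` removable from `μ` has its
Northeastern-most box at the end of the first row of `μ`. -/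
theorem NE_box_in_first_row (k n r : ℕ) (hk : 0 < k) (hkn : k < n) (hr : 0 < r) (hrn : r < n)
    (lam mu : YoungDiagram) (hlam : lam ≤ box k n) (hcl : mu.colLen 0 ≤ k)
    (hhook : IsRimHook lam mu) (hsize : skewSize lam mu = r) (hfr : n - k < mu.rowLen 0) :
    (∀ c ∈ skewCells lam mu, (∀ d ∈ skewCells lam mu, diagOf d ≤ diagOf c) → c.1 = 0) ∧
    (∀ nu : YoungDiagram, IsRimHook nu mu → skewSize nu mu = n →
      ∀ c ∈ skewCells nu mu, (∀ d ∈ skewCells nu mu, diagOf d ≤ diagOf c) →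
        c = (0, mu.rowLen 0 - 1)) :=
  NE_box_in_first_row_general k n hkn lam mu hlam hcl hhook hfr
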